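/- arXiv:1908.04435 — 2 statements merged into one kernel-verified Lean document; each statement's English description precedes it below -/
import Mathlib

section
/- Let M and M̂ be as in the single-component specialization construction. Then the multiset of complex roots (with multiplicity) of the characteristic polynomial of M̂ equals the multiset of complex roots of the characteristic polynomial of M together with (y·w − 1) copies of the multiset of complex roots of the characteristic polynomial of Z; i.e., σ(M̂) = σ(M) ∪ σ(Z)^{y·w − 1} as multisets of eigenvalues. -/
/-!
Take the Schur complement with respect to the `Z`-blocks over the fraction field of `ℝ[X]`.
The lower-right block of `X - M̂` is `1 ⊗ (X - Z)`, so
`det (X - M̂) = det (X - Z) ^ (y w) * det (X - U - ∑_{i,j} Y_i (X - Z)⁻¹ W_j)`, and the sum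
factors as `(∑ Y_i) (X - Z)⁻¹ (∑ W_j)`: this is exactly the Schur complement of `X - Z` in
`X - M`, whence `χ(M̂) = χ(M) χ(Z) ^ (y w - 1)`.
-/

open Matrix

/-- The single-component specialization `M̂` of the block matrix `M = [[U, ΣY_i],[ΣW_j, Z]]`:
indices `B ⊕ (P × C)` with `P = Fin y × Fin w`; its `(B,B)` block is `U`, its
`(B, {(i,j)}×C)` block is `Y i`, its `({(i,j)}×C, B)` block is `W j`, its diagonal
`({(i,j)}×C, {(i,j)}×C)` blocks are `Z`, and all blocks between distinct copies are zero. -/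
def specialization {l m y w : ℕ}
    (U : Matrix (Fin l) (Fin l) ℝ) (Z : Matrix (Fin m) (Fin m) ℝ)
    (Y : Fin y → Matrix (Fin l) (Fin m) ℝ) (W : Fin w → Matrix (Fin m) (Fin l) ℝ) :
    Matrix (Fin l ⊕ ((Fin y × Fin w) × Fin m)) (Fin l ⊕ ((Fin y × Fin w) × Fin m)) ℝ :=
  fun r c =>
    match r, c with
    | Sum.inl a, Sum.inl b => U a b
    | Sum.inl a, Sum.inr ((i, _), c') => Y i a c'
    | Sum.inr ((_, j), r'), Sum.inl b => W j r' b
    | Sum.inr (p, r'), Sum.inr (q, c') => if p = q then Z r' c' else 0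

/-- The original block matrix `M = [[U, Y],[W, Z]]` with `Y = ΣY_i`, `W = ΣW_j`. -/
def origMatrix {l m y w : ℕ}
    (U : Matrix (Fin l) (Fin l) ℝ) (Z : Matrix (Fin m) (Fin m) ℝ)
    (Y : Fin y → Matrix (Fin l) (Fin m) ℝ) (W : Fin w → Matrix (Fin m) (Fin l) ℝ) :
    Matrix (Fin l ⊕ Fin m) (Fin l ⊕ Fin m) ℝ :=
  Matrix.fromBlocks U (∑ i, Y i) (∑ j, W j) Z

open scoped Kronecker

namespace Matrix

variable {l m P ι κ R S : Type*}

lemma map_finsetSum {F : Type*} [AddCommMonoid R] [AddCommMonoid S] [FunLike F R S]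
    [AddMonoidHomClass F R S] (f : F) (s : Finset P) (B : P → Matrix l m R) :
    (∑ p ∈ s, B p).map f = ∑ p ∈ s, (B p).map f :=
  map_sum (AddMonoidHomClass.toAddMonoidHom f).mapMatrix B s

def blockRow (B : P → Matrix l m R) : Matrix l (P × m) R :=
  of fun a pc => B pc.1 a pc.2

def blockCol (C : P → Matrix m l R) : Matrix (P × m) l R :=
  of fun pr b => C pr.1 pr.2 b

lemma blockRow_map (B : P → Matrix l m R) (f : R → S) :
    (blockRow B).map f = blockRow fun p => (B p).map f := rfl

lemma blockCol_map (C : P → Matrix m l R) (f : R → S) :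
    (blockCol C).map f = blockCol fun p => (C p).map f := rfl

lemma neg_blockRow [Neg R] (B : P → Matrix l m R) : -blockRow B = blockRow fun p => -B p := rfl

lemma neg_blockCol [Neg R] (C : P → Matrix m l R) : -blockCol C = blockCol fun p => -C p := rfl

lemma blockRow_mul_one_kronecker_mul_blockCol [CommSemiring R] [Fintype P] [DecidableEq P]
    [Fintype m] (B : P → Matrix l m R) (E : Matrix m m R) (C : P → Matrix m l R) :
    blockRow B * ((1 : Matrix P P R) ⊗ₖ E) * blockCol C = ∑ p, B p * E * C p := by
  ext a b
  simp [blockRow, blockCol, mul_apply, sum_apply, Fintype.sum_prod_type, one_apply,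
    Finset.sum_mul, ite_mul, mul_ite]

variable [DecidableEq ι] [DecidableEq κ]

def blockSpecialization [MulZeroOneClass R] (A : Matrix l l R) (Y : ι → Matrix l m R)
    (W : κ → Matrix m l R) (D : Matrix m m R) :
    Matrix (l ⊕ (ι × κ) × m) (l ⊕ (ι × κ) × m) R :=
  fromBlocks A (blockRow fun p => Y p.1) (blockCol fun p => W p.2) (1 ⊗ₖ D)

lemma blockSpecialization_map [CommRing R] [CommRing S] (A : Matrix l l R)
    (Y : ι → Matrix l m R) (W : κ → Matrix m l R) (D : Matrix m m R) (f : R →+* S) :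
    (blockSpecialization A Y W D).map f =
      blockSpecialization (A.map f) (fun i => (Y i).map f) (fun j => (W j).map f) (D.map f) := by
  rw [blockSpecialization, fromBlocks_map, blockRow_map, blockCol_map]
  congr 1
  ext ⟨p, r⟩ ⟨q, c⟩
  simp [one_apply, apply_ite f]

variable [Fintype l] [Fintype m] [Fintype ι] [Fintype κ] [DecidableEq l] [DecidableEq m]

lemma charmatrix_one_kronecker [CommRing R] (D : Matrix m m R) :
    charmatrix ((1 : Matrix ι ι R) ⊗ₖ D) = 1 ⊗ₖ charmatrix D := by
  ext ⟨p, r⟩ ⟨q, c⟩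
  by_cases hpq : p = q <;> by_cases hrc : r = c <;> simp [hpq, hrc]

lemma charmatrix_blockSpecialization [CommRing R] (A : Matrix l l R)
    (Y : ι → Matrix l m R) (W : κ → Matrix m l R) (D : Matrix m m R) :
    charmatrix (blockSpecialization A Y W D) =
      blockSpecialization (charmatrix A) (fun i => -(Y i).map Polynomial.C)
        (fun j => -(W j).map Polynomial.C) (charmatrix D) := by
  rw [blockSpecialization, charmatrix_fromBlocks, blockRow_map, blockCol_map, neg_blockRow,
    neg_blockCol, charmatrix_one_kronecker]
  rfl

lemma det_blockSpecialization [CommRing R] [Nonempty ι] [Nonempty κ] (A : Matrix l l R)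
    (Y : ι → Matrix l m R) (W : κ → Matrix m l R) (D : Matrix m m R) [Invertible D] :
    det (blockSpecialization A Y W D) =
      det (fromBlocks A (∑ i, Y i) (∑ j, W j) D) *
        det D ^ (Fintype.card ι * Fintype.card κ - 1) := by
  let : Invertible ((1 : Matrix (ι × κ) (ι × κ) R) ⊗ₖ D) :=
    invertibleOfRightInverse _ (1 ⊗ₖ ⅟D) <| by
      rw [← mul_kronecker_mul, mul_one, mul_invOf_self, one_kronecker_one]
  have hinv : ⅟((1 : Matrix (ι × κ) (ι × κ) R) ⊗ₖ D) = 1 ⊗ₖ ⅟D := rfl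
  have hsum : ∑ p : ι × κ, Y p.1 * ⅟D * W p.2 = (∑ i, Y i) * ⅟D * ∑ j, W j := by
    simp only [Fintype.sum_prod_type, Matrix.sum_mul, Matrix.mul_sum]
    exact Finset.sum_comm
  rw [blockSpecialization, det_fromBlocks₂₂, det_fromBlocks₂₂, hinv,
    blockRow_mul_one_kronecker_mul_blockCol, hsum, det_kronecker, det_one, one_pow, one_mul,
    Fintype.card_prod, mul_comm (det D), mul_assoc,
    mul_pow_sub_one (mul_ne_zero Fintype.card_ne_zero Fintype.card_ne_zero), mul_comm]

lemma det_blockSpecialization_of_det_ne_zero [CommRing R] [IsDomain R] [Nonempty ι] [Nonempty κ]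
    (A : Matrix l l R) (Y : ι → Matrix l m R) (W : κ → Matrix m l R) (D : Matrix m m R)
    (hD : det D ≠ 0) :
    det (blockSpecialization A Y W D) =
      det (fromBlocks A (∑ i, Y i) (∑ j, W j) D) *
        det D ^ (Fintype.card ι * Fintype.card κ - 1) := by
  let f := algebraMap R (FractionRing R)
  apply IsFractionRing.injective R (FractionRing R)
  have : Invertible (D.map f) := invertibleOfIsUnitDet _ <| by
    rw [← RingHom.mapMatrix_apply, ← RingHom.map_det, isUnit_iff_ne_zero]
    exact (map_ne_zero_iff f (IsFractionRing.injective R _)).mpr hD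
  simp only [map_mul, map_pow, RingHom.map_det, RingHom.mapMatrix_apply, blockSpecialization_map,
    fromBlocks_map]
  rw [det_blockSpecialization, map_finsetSum, map_finsetSum]

theorem charpoly_blockSpecialization [CommRing R] [IsDomain R] [Nonempty ι] [Nonempty κ]
    (A : Matrix l l R) (Y : ι → Matrix l m R) (W : κ → Matrix m l R) (D : Matrix m m R) :
    charpoly (blockSpecialization A Y W D) =
      charpoly (fromBlocks A (∑ i, Y i) (∑ j, W j) D) *
        charpoly D ^ (Fintype.card ι * Fintype.card κ - 1) := by
  rw [charpoly, charmatrix_blockSpecialization,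
    det_blockSpecialization_of_det_ne_zero _ _ _ _ (charpoly_monic D).ne_zero, charpoly,
    charmatrix_fromBlocks, map_finsetSum, map_finsetSum, ← Finset.sum_neg_distrib,
    ← Finset.sum_neg_distrib]
  rfl

end Matrix

lemma specialization_eq_blockSpecialization {l m y w : ℕ}
    (U : Matrix (Fin l) (Fin l) ℝ) (Z : Matrix (Fin m) (Fin m) ℝ)
    (Y : Fin y → Matrix (Fin l) (Fin m) ℝ) (W : Fin w → Matrix (Fin m) (Fin l) ℝ) :
    specialization U Z Y W = blockSpecialization U Y W Z := by
  ext (a | ⟨p, r⟩) (b | ⟨q, c⟩) <;>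
    simp [specialization, blockSpecialization, blockRow, blockCol, one_apply, ite_mul]

theorem spectrum_specialization_general
    {l m y w : ℕ} (hy : 1 ≤ y) (hw : 1 ≤ w)
    (U : Matrix (Fin l) (Fin l) ℝ) (Z : Matrix (Fin m) (Fin m) ℝ)
    (Y : Fin y → Matrix (Fin l) (Fin m) ℝ) (W : Fin w → Matrix (Fin m) (Fin l) ℝ) :
    (Matrix.charpoly ((specialization U Z Y W).map Complex.ofReal)).roots
      = (Matrix.charpoly ((origMatrix U Z Y W).map Complex.ofReal)).roots
        + (y * w - 1) • (Matrix.charpoly (Z.map Complex.ofReal)).roots := by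
  have : Nonempty (Fin y) := ⟨⟨0, hy⟩⟩
  have : Nonempty (Fin w) := ⟨⟨0, hw⟩⟩
  have hcharpoly : (specialization U Z Y W).charpoly
      = (origMatrix U Z Y W).charpoly * Z.charpoly ^ (y * w - 1) := by
    rw [specialization_eq_blockSpecialization, charpoly_blockSpecialization, Fintype.card_fin,
      Fintype.card_fin, origMatrix]
  have hmap {n : Type} [Fintype n] [DecidableEq n] (M : Matrix n n ℝ) :
      (M.map Complex.ofReal).charpoly = M.charpoly.map Complex.ofRealHom :=
    charpoly_map M Complex.ofRealHom
  rw [hmap, hmap, hmap, hcharpoly, Polynomial.map_mul, Polynomial.map_pow,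
    Polynomial.roots_mul, Polynomial.roots_pow]
  exact (((charpoly_monic _).map _).mul (((charpoly_monic Z).map _).pow _)).ne_zero

/-- the multiset of complex eigenvalues of `M̂` equals the multiset of
complex eigenvalues of `M` together with `y·w − 1` copies of the multiset of complex
eigenvalues of `Z`. -/
theorem spectrum_specialization
    {l m y w : ℕ} (hl : 1 ≤ l) (hm : 1 ≤ m) (hy : 1 ≤ y) (hw : 1 ≤ w)
    (U : Matrix (Fin l) (Fin l) ℝ) (Z : Matrix (Fin m) (Fin m) ℝ)
    (Y : Fin y → Matrix (Fin l) (Fin m) ℝ) (W : Fin w → Matrix (Fin m) (Fin l) ℝ) :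
    (Matrix.charpoly ((specialization U Z Y W).map Complex.ofReal)).roots
      = (Matrix.charpoly ((origMatrix U Z Y W).map Complex.ofReal)).roots
        + (y * w - 1) • (Matrix.charpoly (Z.map Complex.ofReal)).roots :=
  spectrum_specialization_general hy hw U Z Y W
end

section
/- Dynamic stability under thinned specialization: let Λ = M be as in the single-component specialization construction with all blocks U, Z, Y_1,…,Y_y, W_1,…,W_w having nonnegative entries and ρ(Λ) < 1 (intrinsic stability). Let T ⊆ P = {1,…,y}×{1,…,w}, and let Λ̂_T = M̂_T be the thinned specialization of Λ over T, of size N = ℓ + |T|·m. Let X_1, …, X_N be nonempty closed subsets of ℝ, let 𝒴 = {x ∈ ℝ^N : x_i ∈ X_i for all i}, and let G : ℝ^N → ℝ^N map 𝒴 into itself and satisfy |G_i(x) − G_i(y)| ≤ Σ_{j=1}^N (Λ̂_T)_{ij} |x_j − y_j| for all x, y ∈ 𝒴 and all i. Then ρ(Λ̂_T) < 1 and G is globally stable on 𝒴: there exists x* ∈ 𝒴 with G(x*) = x* such that for every x⁰ ∈ 𝒴 the iterates G^k(x⁰) converge to x*. -/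
open Matrix

/-- The thinned specialization `M̂_T` of `M` over a subset `T` of the branch pairs
`P = {1,…,y} × {1,…,w}`: only the copies of `Z` indexed by `T` are kept. -/
def thinnedSpecialization {l m y w : ℕ}
    (U : Matrix (Fin l) (Fin l) ℝ) (Z : Matrix (Fin m) (Fin m) ℝ)
    (Y : Fin y → Matrix (Fin l) (Fin m) ℝ) (W : Fin w → Matrix (Fin m) (Fin l) ℝ)
    (T : Finset (Fin y × Fin w)) :
    Matrix (Fin l ⊕ (↥T × Fin m)) (Fin l ⊕ (↥T × Fin m)) ℝ :=
  fun r c =>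
    match r, c with
    | Sum.inl a, Sum.inl b => U a b
    | Sum.inl a, Sum.inr (p, c') => Y p.1.1 a c'
    | Sum.inr (p, r'), Sum.inl b => W p.1.2 r' b
    | Sum.inr (p, r'), Sum.inr (q, c') => if p = q then Z r' c' else 0

/-- The spectral radius of a square real matrix: the maximum of `|λ|` over the complex
roots `λ` of its characteristic polynomial (and `0` if there are none). -/
noncomputable def specRad {n : Type*} [Fintype n] [DecidableEq n]
    (A : Matrix n n ℝ) : ℝ :=
  (((Matrix.charpoly (A.map Complex.ofReal)).roots).map (fun z : ℂ => ‖z‖)).fold max 0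

/-!
For a nonnegative matrix `A`, `ρ(A) < 1` amounts to a positive subinvariant vector: `A u ≤ c u`
with `c < 1`. By Gelfand's formula `A ^ N 1 ≤ c ^ N 1` for some `N`, so the truncated Neumann
series `∑_{k<N} c⁻ᵏ Aᵏ 1` is subinvariant; conversely, comparing an eigenvector with `u` at the
index maximising the ratio (Collatz–Wielandt) bounds every eigenvalue by `c`.

A subinvariant vector `(v_B, v_C)` of `M` lifts to `M̂_T`: on every copy `(i, j)` of `C` put a
positive `s_j` with `W_j v_B + Z s_j ≤ c s_j` (a solution of `c s_j = Z s_j + W_j v_B + ε v_C`).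
The comparison principle for `Z` gives `∑_j s_j ≤ v_C`, and this controls the `B`-rows, because
the sum over `(i, j) ∈ T ⊆ P` of `Y_i s_j` is at most `(∑_i Y_i)(∑_j s_j)`. Finally, in the
coordinates `x_i / u_i` the Lipschitz bound makes `G` a contraction for the sup distance, and
Banach's fixed-point theorem gives global stability.
-/

open Filter Topology

theorem Multiset.fold_max_le {α : Type*} [LinearOrder α] {b c : α} {s : Multiset α} :
    s.fold max b ≤ c ↔ b ≤ c ∧ ∀ x ∈ s, x ≤ c := by
  induction s using Multiset.induction_on with
  | empty => simp
  | cons a s ih => simp [Multiset.fold_cons_left, ih, and_left_comm]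

theorem Matrix.exists_mulVec_eq_smul_of_mem_spectrum {K n : Type*} [Field K] [Fintype n]
    [DecidableEq n] {B : Matrix n n K} {t : K} (h : t ∈ spectrum K B) :
    ∃ v ≠ 0, B *ᵥ v = t • v := by
  rw [← Matrix.spectrum_toLin', ← Module.End.hasEigenvalue_iff_mem_spectrum] at h
  obtain ⟨v, hv⟩ := h.exists_hasEigenvector
  exact ⟨v, hv.2, by simpa using hv.apply_eq_smul⟩

theorem spectrum.eventually_norm_pow_le {A : Type*} [NormedRing A] [NormedAlgebra ℂ A]
    [CompleteSpace A] (a : A) {r : ℝ} (h : spectralRadius ℂ a < ENNReal.ofReal r) :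
    ∀ᶠ k in atTop, ‖a ^ k‖ ≤ r ^ k := by
  have hr : 0 < r := ENNReal.ofReal_pos.1 (zero_le.trans_lt h)
  filter_upwards [(pow_norm_pow_one_div_tendsto_nhds_spectralRadius a).eventually (gt_mem_nhds h),
    eventually_ge_atTop 1] with k hk hk1
  have hk' : ‖a ^ k‖ ^ (1 / k : ℝ) ≤ r := ((ENNReal.ofReal_lt_ofReal_iff hr).1 hk).le
  calc ‖a ^ k‖ = (‖a ^ k‖ ^ (1 / k : ℝ)) ^ k := by
        rw [← Real.rpow_natCast, ← Real.rpow_mul (norm_nonneg _),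
          one_div_mul_cancel (by positivity), Real.rpow_one]
    _ ≤ r ^ k := pow_le_pow_left₀ (by positivity) hk' k

section SpecRad

variable {n : Type*} [Fintype n] [DecidableEq n]

theorem specRad_le_iff (A : Matrix n n ℝ) {c : ℝ} :
    specRad A ≤ c ↔ 0 ≤ c ∧ ∀ t ∈ spectrum ℂ (A.map Complex.ofReal), ‖t‖ ≤ c := by
  simp [specRad, Multiset.fold_max_le, Polynomial.mem_roots (Matrix.charpoly_monic _).ne_zero,
    Matrix.mem_spectrum_iff_isRoot_charpoly]

theorem specRad_nonneg (A : Matrix n n ℝ) : 0 ≤ specRad A :=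
  ((specRad_le_iff A).1 le_rfl).1

theorem spectralRadius_map_ofReal_le_specRad (A : Matrix n n ℝ) :
    spectralRadius ℂ (A.map Complex.ofReal) ≤ ENNReal.ofReal (specRad A) :=
  iSup₂_le fun t ht => by
    rw [← enorm_eq_nnnorm, ← ofReal_norm]
    exact ENNReal.ofReal_le_ofReal (((specRad_le_iff A).1 le_rfl).2 t ht)

attribute [local instance] Matrix.linftyOpNormedRing Matrix.linftyOpNormedAlgebra

theorem eventually_pow_mulVec_one_le (A : Matrix n n ℝ) {r : ℝ} (h : specRad A < r) :
    ∀ᶠ k in atTop, A ^ k *ᵥ 1 ≤ r ^ k • 1 := by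
  have hr0 : 0 < r := (specRad_nonneg A).trans_lt h
  have hr : spectralRadius ℂ (A.map Complex.ofReal) < ENNReal.ofReal r :=
    (spectralRadius_map_ofReal_le_specRad A).trans_lt ((ENNReal.ofReal_lt_ofReal_iff hr0).2 h)
  filter_upwards [spectrum.eventually_norm_pow_le _ hr] with k hk
  have hmap : (A ^ k).map Complex.ofReal = A.map Complex.ofReal ^ k :=
    Matrix.map_pow A Complex.ofRealHom k
  have hnorm : ‖A ^ k‖ ≤ r ^ k := by
    rw [← hmap] at hk
    simpa [Matrix.linfty_opNorm_def] using hk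
  intro i
  calc (A ^ k *ᵥ 1) i ≤ ‖A ^ k *ᵥ 1‖ := (le_abs_self _).trans (norm_le_pi_norm (A ^ k *ᵥ 1) i)
    _ ≤ ‖A ^ k‖ * ‖(1 : n → ℝ)‖ := Matrix.linfty_opNorm_mulVec _ _
    _ ≤ r ^ k * 1 := mul_le_mul hnorm ((pi_norm_le_iff_of_nonneg zero_le_one).2 fun _ => by simp)
        (norm_nonneg _) (pow_nonneg hr0.le k)
    _ = (r ^ k • (1 : n → ℝ)) i := by simp

end SpecRad

section Nonneg

variable {m n : Type*} [Fintype n] {A : Matrix m n ℝ}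

theorem mulVec_nonneg_of_nonneg (hA : ∀ i j, 0 ≤ A i j) {x : n → ℝ} (hx : 0 ≤ x) :
    0 ≤ A *ᵥ x :=
  fun i => Finset.sum_nonneg fun j _ => mul_nonneg (hA i j) (hx j)

theorem mulVec_mono_of_nonneg (hA : ∀ i j, 0 ≤ A i j) {x y : n → ℝ} (hxy : x ≤ y) :
    A *ᵥ x ≤ A *ᵥ y := by
  simpa [mulVec_sub] using mulVec_nonneg_of_nonneg hA (sub_nonneg.2 hxy)

theorem abs_mulVec_le (hA : ∀ i j, 0 ≤ A i j) (x : n → ℝ) (i : m) :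
    |(A *ᵥ x) i| ≤ ∑ j, A i j * |x j| :=
  (Finset.abs_sum_le_sum_abs _ _).trans_eq <| by simp [abs_mul, abs_of_nonneg (hA i _)]

end Nonneg

section CollatzWielandt

variable {n : Type*} [Fintype n] {A : Matrix n n ℝ} {u : n → ℝ}

/-- Collatz–Wielandt: compare the two sides at an index maximising `d i / u i`. -/
theorem le_of_smul_le_mulVec (hA : ∀ i j, 0 ≤ A i j) (hu : ∀ i, 0 < u i) {c : ℝ}
    (hAu : A *ᵥ u ≤ c • u) {d : n → ℝ} {r : ℝ} (hd : r • d ≤ A *ᵥ d) (hpos : ∃ i, 0 < d i) :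
    r ≤ c := by
  obtain ⟨i, hi⟩ := hpos
  obtain ⟨i₀, -, hmax⟩ :=
    Finset.univ.exists_max_image (fun j => d j / u j) ⟨i, Finset.mem_univ i⟩
  set t := d i₀ / u i₀
  have ht : 0 < t := (div_pos hi (hu i)).trans_le (hmax i (Finset.mem_univ i))
  have hdt : d ≤ t • u := fun j => (div_le_iff₀ (hu j)).1 (hmax j (Finset.mem_univ j))
  have hdi₀ : d i₀ = t * u i₀ := (div_mul_cancel₀ _ (hu i₀).ne').symm
  have key : r * d i₀ ≤ c * d i₀ :=
    calc r * d i₀ ≤ (A *ᵥ d) i₀ := hd i₀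
      _ ≤ (A *ᵥ (t • u)) i₀ := mulVec_mono_of_nonneg hA hdt i₀
      _ = t * (A *ᵥ u) i₀ := by rw [mulVec_smul]; rfl
      _ ≤ t * (c * u i₀) := mul_le_mul_of_nonneg_left (hAu i₀) ht.le
      _ = c * d i₀ := by rw [hdi₀]; ring
  exact le_of_mul_le_mul_right key (hdi₀ ▸ mul_pos ht (hu i₀))

theorem le_of_smul_le_mulVec_add (hA : ∀ i j, 0 ≤ A i j) (hu : ∀ i, 0 < u i) {c₁ c : ℝ}
    (hAu : A *ᵥ u ≤ c₁ • u) (hc : c₁ < c) {s x : n → ℝ} (hs : c • s ≤ A *ᵥ s + x)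
    (hx : A *ᵥ u + x ≤ c • u) : s ≤ u := by
  refine fun i => le_of_not_gt fun hi => hc.not_ge ?_
  refine le_of_smul_le_mulVec hA hu hAu (d := s - u) (fun j => ?_) ⟨i, sub_pos.2 hi⟩
  have := hs j
  have := hx j
  simp only [Pi.smul_apply, smul_eq_mul, Pi.add_apply, Pi.sub_apply, mulVec_sub] at *
  linarith

end CollatzWielandt

section Subinvariant

variable {n : Type*} [Fintype n] [DecidableEq n] {A : Matrix n n ℝ}

theorem pow_mulVec_nonneg (hA : ∀ i j, 0 ≤ A i j) {x : n → ℝ} (hx : 0 ≤ x) (k : ℕ) :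
    0 ≤ A ^ k *ᵥ x := by
  induction k with
  | zero => simpa using hx
  | succ k ih => rw [pow_succ', ← mulVec_mulVec]; exact mulVec_nonneg_of_nonneg hA ih

theorem specRad_le_of_subinvariant (hA : ∀ i j, 0 ≤ A i j) {u : n → ℝ} (hu : ∀ i, 0 < u i)
    {c : ℝ} (hc : 0 ≤ c) (hAu : A *ᵥ u ≤ c • u) : specRad A ≤ c := by
  refine (specRad_le_iff A).2 ⟨hc, fun t ht => ?_⟩
  obtain ⟨v, hv0, hv⟩ := Matrix.exists_mulVec_eq_smul_of_mem_spectrum ht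
  obtain ⟨i, hi⟩ := Function.ne_iff.1 hv0
  refine le_of_smul_le_mulVec hA hu hAu (d := fun j => ‖v j‖) (fun j => ?_) ⟨i, norm_pos_iff.2 hi⟩
  calc ‖t‖ * ‖v j‖ = ‖(A.map Complex.ofReal *ᵥ v) j‖ := by simp [hv]
    _ ≤ ∑ k, A j k * ‖v k‖ := (norm_sum_le _ _).trans_eq <| by
        simp [Complex.norm_real, abs_of_nonneg (hA j _)]

theorem exists_subinvariant_of_specRad_lt_one (hA : ∀ i j, 0 ≤ A i j) (h : specRad A < 1) :
    ∃ c : ℝ, 0 < c ∧ c < 1 ∧ ∃ u : n → ℝ, (∀ i, 0 < u i) ∧ A *ᵥ u ≤ c • u := by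
  obtain ⟨c, hρc, hc1⟩ := exists_between h
  have hc0 : 0 < c := (specRad_nonneg A).trans_lt hρc
  obtain ⟨N, hN1, hN⟩ := ((eventually_ge_atTop 1).and (eventually_pow_mulVec_one_le A hρc)).exists
  -- `u` is the Neumann series of `A / c` applied to `1`, truncated where `(A / c) ^ N *ᵥ 1 ≤ 1`
  set f : ℕ → n → ℝ := fun k => c⁻¹ ^ k • (A ^ k *ᵥ 1)
  set u := ∑ k ∈ Finset.range N, f k
  have hf : ∀ k, 0 ≤ f k := fun k =>
    smul_nonneg (by positivity) (pow_mulVec_nonneg hA (fun _ => zero_le_one) k)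
  have hAf : ∀ k, A *ᵥ f k = c • f (k + 1) := fun k => by
    simp only [f, mulVec_smul, mulVec_mulVec, ← pow_succ', smul_smul]
    congr 1
    rw [pow_succ]
    field_simp
  have hAu : A *ᵥ u = c • (u - 1 + f N) := by
    have htel := Finset.sum_range_succ' f N
    rw [Finset.sum_range_succ] at htel
    rw [show f 0 = 1 by simp [f]] at htel
    rw [mulVec_sum, Finset.sum_congr rfl fun k _ => hAf k, ← Finset.smul_sum]
    congr 1
    simp only [u]
    linear_combination -htel
  refine ⟨c, hc0, hc1, u, fun i => ?_, ?_⟩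
  · calc (0 : ℝ) < f 0 i := by simp [f]
      _ ≤ u i := Finset.single_le_sum (fun k _ => hf k) (Finset.mem_range.2 hN1) i
  · rw [hAu]
    intro i
    have hfN : f N i ≤ 1 := by
      have := hN i
      simp only [f, Pi.smul_apply, smul_eq_mul, Pi.one_apply, mul_one] at this ⊢
      rwa [inv_pow, inv_mul_le_iff₀ (by positivity), mul_one]
    simp only [Pi.smul_apply, smul_eq_mul, Pi.add_apply, Pi.sub_apply, Pi.one_apply]
    exact mul_le_mul_of_nonneg_left (by linarith) hc0.le

end Subinvariant

def IsGloballyStable {E : Type*} [TopologicalSpace E] (G : E → E) (S : Set E) : Prop :=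
  ∃ xstar ∈ S, G xstar = xstar ∧ ∀ x0 ∈ S, Tendsto (fun k => G^[k] x0) atTop (𝓝 xstar)

theorem ContractingWith.isGloballyStable {E : Type*} [MetricSpace E] [CompleteSpace E]
    {G : E → E} {S : Set E} {K : NNReal} (hS : IsClosed S) (hne : S.Nonempty)
    (hGS : Set.MapsTo G S S) (hG : ContractingWith K (hGS.restrict G S S)) :
    IsGloballyStable G S := by
  have := hS.completeSpace_coe
  have := hne.to_subtype
  refine ⟨_, (fixedPoint _ hG).2, congrArg Subtype.val (fixedPoint_isFixedPt hG),
    fun x0 hx0 => ?_⟩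
  have := (continuous_subtype_val.tendsto _).comp (hG.tendsto_iterate_fixedPoint ⟨x0, hx0⟩)
  simpa [Function.comp_def, hGS.iterate_restrict] using this

theorem IsGloballyStable.of_semiconj {E F : Type*} [TopologicalSpace E] [TopologicalSpace F]
    (e : E ≃ₜ F) {G' : E → E} {G : F → F} (h : Function.Semiconj e G' G) {S : Set F}
    (hG' : IsGloballyStable G' (e ⁻¹' S)) : IsGloballyStable G S := by
  obtain ⟨z, hz, hfix, hconv⟩ := hG'
  refine ⟨e z, hz, by rw [← h, hfix], fun x0 hx0 => ?_⟩
  have := (e.continuous.tendsto z).comp (hconv (e.symm x0) (by simpa using hx0))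
  refine this.congr fun k => ?_
  simp [(h.iterate_right k).eq]

/-- In the coordinates `x i / u i` the map is a contraction for the sup distance. -/
theorem isGloballyStable_of_subinvariant {ι : Type*} [Fintype ι] {A : Matrix ι ι ℝ}
    (hA : ∀ i j, 0 ≤ A i j) {u : ι → ℝ} (hu : ∀ i, 0 < u i) {c : ℝ} (hc : c < 1)
    (hAu : A *ᵥ u ≤ c • u) {X : ι → Set ℝ} (hXne : ∀ i, (X i).Nonempty)
    (hXcl : ∀ i, IsClosed (X i)) {G : (ι → ℝ) → (ι → ℝ)}
    (hG : ∀ x, (∀ i, x i ∈ X i) → ∀ i, G x i ∈ X i)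
    (hLip : ∀ x y, (∀ i, x i ∈ X i) → (∀ i, y i ∈ X i) →
      ∀ i, |G x i - G y i| ≤ ∑ j, A i j * |x j - y j|) :
    IsGloballyStable G {x | ∀ i, x i ∈ X i} := by
  let e : (ι → ℝ) ≃ₜ (ι → ℝ) :=
    Homeomorph.piCongrRight fun i => Homeomorph.mulLeft₀ (u i) (hu i).ne'
  have he : ∀ z i, e z i = u i * z i := fun _ _ => rfl
  have he_symm : ∀ x i, e.symm x i = (u i)⁻¹ * x i := fun _ _ => rfl
  have hS : IsClosed {x : ι → ℝ | ∀ i, x i ∈ X i} := by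
    rw [Set.ofPred_forall]
    exact isClosed_iInter fun i => (hXcl i).preimage (continuous_apply i)
  have hmaps : Set.MapsTo (e.symm ∘ G ∘ e) (e ⁻¹' {x | ∀ i, x i ∈ X i})
      (e ⁻¹' {x | ∀ i, x i ∈ X i}) := fun z hz => by
    simpa using hG _ hz
  refine IsGloballyStable.of_semiconj e (G' := e.symm ∘ G ∘ e) (fun z => by simp) ?_
  refine ContractingWith.isGloballyStable (hS.preimage e.continuous) ?_ hmaps
    ⟨Real.toNNReal_lt_one.2 hc, LipschitzWith.of_dist_le_mul fun z z' => ?_⟩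
  · exact ⟨e.symm fun i => (hXne i).some, by simpa using fun i => (hXne i).some_mem⟩
  rw [Subtype.dist_eq, Subtype.dist_eq]
  refine (dist_pi_le_iff (by positivity)).2 fun i => ?_
  simp only [Set.MapsTo.val_restrict_apply, Function.comp_apply, he_symm, Real.dist_eq, ← mul_sub,
    abs_mul, abs_inv, abs_of_pos (hu i)]
  rw [inv_mul_le_iff₀ (hu i)]
  calc |G (e z) i - G (e z') i| ≤ ∑ j, A i j * |e z j - e z' j| := hLip _ _ z.2 z'.2 i
    _ ≤ ∑ j, A i j * (u j * dist z.1 z'.1) := by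
        gcongr with j
        · exact hA i j
        rw [he, he, ← mul_sub, abs_mul, abs_of_pos (hu j), ← Real.dist_eq]
        exact mul_le_mul_of_nonneg_left (dist_le_pi_dist _ _ j) (hu j).le
    _ = (A *ᵥ u) i * dist z.1 z'.1 := by simp [mulVec, dotProduct, Finset.sum_mul, mul_assoc]
    _ ≤ c * u i * dist z.1 z'.1 := mul_le_mul_of_nonneg_right (hAu i) dist_nonneg
    _ = u i * (c * dist z.1 z'.1) := by ring
    _ ≤ u i * (c.toNNReal * dist z.1 z'.1) := by
        gcongr
        exacts [(hu i).le, Real.le_coe_toNNReal c]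

/-- The nonnegative solution of `c • s = Z *ᵥ s + x` is the fixed point of the affine map
`s ↦ c⁻¹ • (Z *ᵥ s + x)`, a contraction by `c₁ / c` in the norm weighted by `v`. -/
theorem exists_nonneg_smul_eq_mulVec_add {n : Type*} [Fintype n] {Z : Matrix n n ℝ}
    (hZ : ∀ i j, 0 ≤ Z i j) {v : n → ℝ} (hv : ∀ i, 0 < v i) {c₁ c : ℝ}
    (hZv : Z *ᵥ v ≤ c₁ • v) (hc : c₁ < c) (hc0 : 0 < c) {x : n → ℝ} (hx : 0 ≤ x) :
    ∃ s, 0 ≤ s ∧ c • s = Z *ᵥ s + x := by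
  have hc0' : 0 ≤ c⁻¹ := inv_nonneg.2 hc0.le
  have hA : ∀ i j, 0 ≤ (c⁻¹ • Z) i j := fun i j => mul_nonneg hc0' (hZ i j)
  have hAv : (c⁻¹ • Z) *ᵥ v ≤ (c₁ / c) • v := by
    rw [smul_mulVec, div_eq_inv_mul, mul_smul]
    exact smul_le_smul_of_nonneg_left hZv hc0'
  let F : (n → ℝ) → n → ℝ := fun s => c⁻¹ • (Z *ᵥ s + x)
  have hmaps : ∀ s, (∀ i, s i ∈ Set.Ici 0) → ∀ i, F s i ∈ Set.Ici 0 :=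
    fun s hs i => mul_nonneg hc0' (add_nonneg (mulVec_nonneg_of_nonneg hZ hs i) (hx i))
  have hLip : ∀ s s' : n → ℝ, ∀ i, |F s i - F s' i| ≤ ∑ j, (c⁻¹ • Z) i j * |s j - s' j| :=
    fun s s' i => by
      have hF : F s - F s' = (c⁻¹ • Z) *ᵥ (s - s') := by
        simp only [F, smul_mulVec, mulVec_sub, ← smul_sub, add_sub_add_right_eq_sub]
      simpa [← hF] using abs_mulVec_le hA (s - s') i
  obtain ⟨s, hs, hfix, -⟩ := isGloballyStable_of_subinvariant hA hv ((div_lt_one hc0).2 hc) hAv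
    (fun _ => Set.nonempty_Ici) (fun _ => isClosed_Ici) hmaps (fun s s' _ _ => hLip s s')
  refine ⟨s, hs, ?_⟩
  nth_rw 1 [← hfix]
  simp only [F, smul_smul, mul_inv_cancel₀ hc0.ne', one_smul]

theorem exists_subinvariant_split {ι n : Type*} [Fintype ι] [Fintype n] {Z : Matrix n n ℝ}
    (hZ : ∀ i j, 0 ≤ Z i j) {v : n → ℝ} (hv : ∀ i, 0 < v i) {x : ι → n → ℝ}
    (hx : ∀ j, 0 ≤ x j) {c₁ c : ℝ} (hZx : Z *ᵥ v + ∑ j, x j ≤ c₁ • v) (hc : c₁ < c)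
    (hc0 : 0 < c) :
    ∃ s : ι → n → ℝ, (∀ j i, 0 < s j i) ∧ (∀ j, x j + Z *ᵥ s j ≤ c • s j) ∧ ∑ j, s j ≤ v := by
  have hZv : Z *ᵥ v ≤ c₁ • v :=
    (le_add_of_nonneg_right (Finset.sum_nonneg fun j _ => hx j)).trans hZx
  -- each `s j` takes the share `ε` of the slack `c - c₁`
  set ε := (c - c₁) / (Fintype.card ι + 1)
  have hε : 0 < ε := div_pos (sub_pos.2 hc) (by positivity)
  have hε_sum : (Fintype.card ι : ℝ) * ε ≤ c - c₁ := by
    rw [mul_div_assoc', div_le_iff₀ (by positivity)]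
    nlinarith
  have hεv : 0 ≤ ε • v := smul_nonneg hε.le fun i => (hv i).le
  choose s hs0 hs using fun j =>
    exists_nonneg_smul_eq_mulVec_add hZ hv hZv hc hc0 (add_nonneg (hx j) hεv)
  refine ⟨s, fun j i => ?_, fun j => ?_, ?_⟩
  · have hsi := congrFun (hs j) i
    have : 0 ≤ (Z *ᵥ s j) i := mulVec_nonneg_of_nonneg hZ (hs0 j) i
    have : 0 ≤ x j i := hx j i
    have := mul_pos hε (hv i)
    simp only [Pi.smul_apply, Pi.add_apply, smul_eq_mul] at hsi
    exact pos_of_mul_pos_right (by linarith) hc0.le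
  · calc x j + Z *ᵥ s j ≤ x j + Z *ᵥ s j + ε • v := le_add_of_nonneg_right hεv
      _ = c • s j := by rw [hs j]; abel
  · refine le_of_smul_le_mulVec_add hZ hv hZv hc (x := ∑ j, (x j + ε • v)) (le_of_eq ?_)
      fun i => ?_
    · simp only [Finset.smul_sum, hs, Finset.sum_add_distrib, mulVec_sum]
    · have := hZx i
      have := mul_le_mul_of_nonneg_right hε_sum (hv i).le
      simp only [Pi.smul_apply, Pi.add_apply, smul_eq_mul, Finset.sum_apply] at *
      simp only [Finset.sum_add_distrib, Finset.sum_const, Finset.card_univ, nsmul_eq_mul] at *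
      linarith

section ThinnedSpecialization

variable {l m y w : ℕ} (U : Matrix (Fin l) (Fin l) ℝ) (Z : Matrix (Fin m) (Fin m) ℝ)
  (Y : Fin y → Matrix (Fin l) (Fin m) ℝ) (W : Fin w → Matrix (Fin m) (Fin l) ℝ)
  (T : Finset (Fin y × Fin w))

theorem origMatrix_nonneg (hU : ∀ a b, 0 ≤ U a b) (hZ : ∀ a b, 0 ≤ Z a b)
    (hY : ∀ i a b, 0 ≤ Y i a b) (hW : ∀ j a b, 0 ≤ W j a b) :
    ∀ i j, 0 ≤ origMatrix U Z Y W i j := by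
  rintro (a | a) (b | b)
  · exact hU a b
  · simpa [origMatrix, Matrix.sum_apply] using Finset.sum_nonneg fun i _ => hY i a b
  · simpa [origMatrix, Matrix.sum_apply] using Finset.sum_nonneg fun j _ => hW j a b
  · exact hZ a b

theorem thinnedSpecialization_nonneg (hU : ∀ a b, 0 ≤ U a b) (hZ : ∀ a b, 0 ≤ Z a b)
    (hY : ∀ i a b, 0 ≤ Y i a b) (hW : ∀ j a b, 0 ≤ W j a b) :
    ∀ i j, 0 ≤ thinnedSpecialization U Z Y W T i j := by
  rintro (a | ⟨p, a⟩) (b | ⟨q, b⟩)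
  · exact hU a b
  · exact hY _ a b
  · exact hW _ a b
  · simp only [thinnedSpecialization]
    split_ifs
    exacts [hZ a b, le_rfl]

theorem thinnedSpecialization_mulVec_inl (u : Fin l ⊕ (T × Fin m) → ℝ) (b : Fin l) :
    (thinnedSpecialization U Z Y W T *ᵥ u) (Sum.inl b) =
      (U *ᵥ (u ∘ Sum.inl)) b + ∑ p : T, (Y p.1.1 *ᵥ fun a => u (Sum.inr (p, a))) b := by
  simp [mulVec, dotProduct, Fintype.sum_sum_type, Fintype.sum_prod_type, thinnedSpecialization]

theorem thinnedSpecialization_mulVec_inr (u : Fin l ⊕ (T × Fin m) → ℝ) (p : T) (a : Fin m) :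
    (thinnedSpecialization U Z Y W T *ᵥ u) (Sum.inr (p, a)) =
      (W p.1.2 *ᵥ (u ∘ Sum.inl)) a + (Z *ᵥ fun a' => u (Sum.inr (p, a'))) a := by
  simp [mulVec, dotProduct, Fintype.sum_sum_type, Fintype.sum_prod_type, thinnedSpecialization,
    ite_mul]

theorem exists_subinvariant_thinnedSpecialization (hU : ∀ a b, 0 ≤ U a b)
    (hZ : ∀ a b, 0 ≤ Z a b) (hY : ∀ i a b, 0 ≤ Y i a b) (hW : ∀ j a b, 0 ≤ W j a b)
    {v : Fin l ⊕ Fin m → ℝ} (hv : ∀ i, 0 < v i) {c₁ c : ℝ}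
    (hMv : origMatrix U Z Y W *ᵥ v ≤ c₁ • v) (hc : c₁ < c) (hc0 : 0 < c) :
    ∃ u, (∀ i, 0 < u i) ∧ thinnedSpecialization U Z Y W T *ᵥ u ≤ c • u := by
  set vB := v ∘ Sum.inl
  set vC := v ∘ Sum.inr
  have hB : U *ᵥ vB + (∑ i, Y i) *ᵥ vC ≤ c₁ • vB := fun b => by
    simpa [origMatrix, fromBlocks_mulVec, vB, vC] using hMv (Sum.inl b)
  have hC : Z *ᵥ vC + ∑ j, W j *ᵥ vB ≤ c₁ • vC := fun a => by
    simpa [origMatrix, fromBlocks_mulVec, sum_mulVec, vB, vC, add_comm] using hMv (Sum.inr a)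
  obtain ⟨s, hs_pos, hs, hsum⟩ := exists_subinvariant_split hZ (fun a => hv (Sum.inr a))
    (fun j => mulVec_nonneg_of_nonneg (hW j) fun b => (hv _).le) hC hc hc0
  refine ⟨Sum.elim vB fun q => s q.1.1.2 q.2, ?_, ?_⟩
  · rintro (b | q)
    exacts [hv _, hs_pos _ _]
  rintro (b | ⟨p, a⟩)
  · rw [thinnedSpecialization_mulVec_inl]
    have hYnn : ∀ a c, 0 ≤ (∑ i, Y i) a c := fun a c =>
      origMatrix_nonneg U Z Y W hU hZ hY hW (Sum.inl a) (Sum.inr c)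
    calc (U *ᵥ vB) b + ∑ p : T, (Y p.1.1 *ᵥ s p.1.2) b
        ≤ (U *ᵥ vB) b + ∑ p : Fin y × Fin w, (Y p.1 *ᵥ s p.2) b := by
          gcongr
          rw [Finset.sum_coe_sort T fun p => (Y p.1 *ᵥ s p.2) b]
          exact Finset.sum_le_univ_sum_of_nonneg fun p =>
            mulVec_nonneg_of_nonneg (hY p.1) (fun a => (hs_pos p.2 a).le) b
      _ = (U *ᵥ vB) b + ((∑ i, Y i) *ᵥ ∑ j, s j) b := by
          simp only [Fintype.sum_prod_type, sum_mulVec, mulVec_sum, Finset.sum_apply]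
          exact congrArg _ Finset.sum_comm
      _ ≤ (U *ᵥ vB) b + ((∑ i, Y i) *ᵥ vC) b := by
          gcongr
          exact mulVec_mono_of_nonneg hYnn hsum b
      _ ≤ c₁ * vB b := hB b
      _ ≤ c * vB b := by gcongr; exact (hv _).le
  · rw [thinnedSpecialization_mulVec_inr]
    exact hs p.1.2 a

end ThinnedSpecialization

theorem intrinsic_stability_preserved_by_thinnedSpecialization_general
    {l m y w : ℕ}
    (U : Matrix (Fin l) (Fin l) ℝ) (Z : Matrix (Fin m) (Fin m) ℝ)
    (Y : Fin y → Matrix (Fin l) (Fin m) ℝ) (W : Fin w → Matrix (Fin m) (Fin l) ℝ)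
    (hU : ∀ a b, 0 ≤ U a b) (hZ : ∀ a b, 0 ≤ Z a b)
    (hY : ∀ i a b, 0 ≤ Y i a b) (hW : ∀ j a b, 0 ≤ W j a b)
    (hρ : specRad (origMatrix U Z Y W) < 1)
    (T : Finset (Fin y × Fin w))
    (X : (Fin l ⊕ (↥T × Fin m)) → Set ℝ)
    (hXne : ∀ i, (X i).Nonempty) (hXcl : ∀ i, IsClosed (X i))
    (G : ((Fin l ⊕ (↥T × Fin m)) → ℝ) → ((Fin l ⊕ (↥T × Fin m)) → ℝ))
    (hG : ∀ x, (∀ i, x i ∈ X i) → ∀ i, G x i ∈ X i)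
    (hLip : ∀ x y', (∀ i, x i ∈ X i) → (∀ i, y' i ∈ X i) →
      ∀ i, |G x i - G y' i| ≤ ∑ j, thinnedSpecialization U Z Y W T i j * |x j - y' j|) :
    specRad (thinnedSpecialization U Z Y W T) < 1
    ∧ ∃ xstar, (∀ i, xstar i ∈ X i) ∧ G xstar = xstar ∧
        ∀ x0, (∀ i, x0 i ∈ X i) →
          Filter.Tendsto (fun k => G^[k] x0) Filter.atTop (nhds xstar) := by
  obtain ⟨c₁, hc₁0, hc₁1, v, hv, hMv⟩ :=
    exists_subinvariant_of_specRad_lt_one (origMatrix_nonneg U Z Y W hU hZ hY hW) hρ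
  obtain ⟨c, hc₁c, hc1⟩ := exists_between hc₁1
  have hc0 : 0 < c := hc₁0.trans hc₁c
  obtain ⟨u, hu, hMu⟩ :=
    exists_subinvariant_thinnedSpecialization U Z Y W T hU hZ hY hW hv hMv hc₁c hc0
  have hM := thinnedSpecialization_nonneg U Z Y W T hU hZ hY hW
  exact ⟨(specRad_le_of_subinvariant hM hu hc0.le hMu).trans_lt hc1,
    isGloballyStable_of_subinvariant hM hu hc1 hMu hXne hXcl hG hLip⟩

/-- dynamic stability under thinned specialization.  If the stability matrix
`Λ = M` is nonnegative with `ρ(Λ) < 1`, then any thinned specialization `Λ̂_T` satisfies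
`ρ(Λ̂_T) < 1`, and any network map `G` on the thinned index set whose variation is bounded
by `Λ̂_T` is globally stable. -/
theorem intrinsic_stability_preserved_by_thinnedSpecialization
    {l m y w : ℕ} (hl : 1 ≤ l) (hm : 1 ≤ m) (hy : 1 ≤ y) (hw : 1 ≤ w)
    (U : Matrix (Fin l) (Fin l) ℝ) (Z : Matrix (Fin m) (Fin m) ℝ)
    (Y : Fin y → Matrix (Fin l) (Fin m) ℝ) (W : Fin w → Matrix (Fin m) (Fin l) ℝ)
    (hU : ∀ a b, 0 ≤ U a b) (hZ : ∀ a b, 0 ≤ Z a b)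
    (hY : ∀ i a b, 0 ≤ Y i a b) (hW : ∀ j a b, 0 ≤ W j a b)
    (hρ : specRad (origMatrix U Z Y W) < 1)
    (T : Finset (Fin y × Fin w))
    (X : (Fin l ⊕ (↥T × Fin m)) → Set ℝ)
    (hXne : ∀ i, (X i).Nonempty) (hXcl : ∀ i, IsClosed (X i))
    (G : ((Fin l ⊕ (↥T × Fin m)) → ℝ) → ((Fin l ⊕ (↥T × Fin m)) → ℝ))
    (hG : ∀ x, (∀ i, x i ∈ X i) → ∀ i, G x i ∈ X i)
    (hLip : ∀ x y', (∀ i, x i ∈ X i) → (∀ i, y' i ∈ X i) →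
      ∀ i, |G x i - G y' i| ≤ ∑ j, thinnedSpecialization U Z Y W T i j * |x j - y' j|) :
    specRad (thinnedSpecialization U Z Y W T) < 1
    ∧ ∃ xstar, (∀ i, xstar i ∈ X i) ∧ G xstar = xstar ∧
        ∀ x0, (∀ i, x0 i ∈ X i) →
          Filter.Tendsto (fun k => G^[k] x0) Filter.atTop (nhds xstar) :=
  intrinsic_stability_preserved_by_thinnedSpecialization_general U Z Y W hU hZ hY hW hρ T X hXne
    hXcl G hG hLip
end
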